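/- arXiv:1510.01868 — 2 statements merged into one kernel-verified Lean document; each statement's English description precedes it below -/
import Mathlib

section
/- Let S be a subsemigroup of the partition monoid P_n, and let x ∈ P_n. Then the map λ: P_n → Proj(P_n) defined by (x)λ = x* x is a homomorphism from the right-multiplication action of S on P_n to the right action of S on projections given by p · y = y* p y, and the kernel of λ is Green's L-relation of P_n. Moreover, if L is any L-class of P_n and x ∈ L, then the stabiliser group S_L (maps induced on L by {s ∈ S^1 : Ls = L}) acts faithfully on the set of transverse blocks of x* x. -/
/-- The underlying set `{1,…,n} ∪ {−1,…,−n}` of points of the partition monoid: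
`Sum.inl i` is the positive point `i + 1`, `Sum.inr i` is the negative point `−(i + 1)`. -/
abbrev PBase (n : ℕ) := Fin n ⊕ Fin n

/-- Elements of the partition monoid `P_n`: set partitions of
`{1,…,n} ∪ {−1,…,−n}`, encoded as equivalence relations (setoids). -/
abbrev PartitionMonoid (n : ℕ) := Setoid (PBase n)

namespace PartitionMonoid

variable {n : ℕ}

/-- Three copies of `{1,…,n}`, used to define the product of two partitions. -/
abbrev Tri (n : ℕ) := Fin n ⊕ (Fin n ⊕ Fin n)

/-- Embedding of the points of the left factor `x` into the three layers:
positive points to the top layer, negative points to the middle layer. -/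
def ix : PBase n → Tri n := Sum.elim Sum.inl (fun i => Sum.inr (Sum.inl i))

/-- Embedding of the points of the right factor `y` into the three layers:
positive points to the middle layer, negative points to the bottom layer. -/
def iy : PBase n → Tri n := Sum.elim (fun i => Sum.inr (Sum.inl i)) (fun i => Sum.inr (Sum.inr i))

/-- Embedding of the points of the product into the three layers:
positive points to the top layer, negative points to the bottom layer. -/
def iz : PBase n → Tri n := Sum.elim Sum.inl (fun i => Sum.inr (Sum.inr i))

/-- The relation on the three layers generated by the blocks of `x` (on the top
two layers) and the blocks of `y` (on the bottom two layers). -/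
def prodBase (x y : PartitionMonoid n) (u v : Tri n) : Prop :=
  (∃ p q, ix p = u ∧ ix q = v ∧ x.r p q) ∨ (∃ p q, iy p = u ∧ iy q = v ∧ y.r p q)

/-- The product of two partitions: two points of the product are in the same
block iff they are connected in the graph obtained by glueing the negative
points of `x` to the positive points of `y`. -/
instance : Mul (PartitionMonoid n) :=
  ⟨fun x y =>
    { r := fun p q => Relation.EqvGen (prodBase x y) (iz p) (iz q)
      iseqv :=
        ⟨fun p => Relation.EqvGen.refl _,
         fun h => Relation.EqvGen.symm _ _ h,
         fun h h' => Relation.EqvGen.trans _ _ _ h h'⟩ }⟩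

/-- The involution `x ↦ x*` of the partition monoid, swapping `i` and `−i` in
every block. -/
instance : Star (PartitionMonoid n) := ⟨fun x => Setoid.comap Sum.swap x⟩

/-- Green's L-relation on `P_n`: `x L y` iff `P_n^1 x = P_n^1 y`. -/
def pL (x y : PartitionMonoid n) : Prop :=
  (x = y ∨ ∃ a, a * x = y) ∧ (y = x ∨ ∃ a, a * y = x)

/-- Green's R-relation on `P_n`: `x R y` iff `x P_n^1 = y P_n^1`. -/
def pR (x y : PartitionMonoid n) : Prop :=
  (x = y ∨ ∃ a, x * a = y) ∧ (y = x ∨ ∃ a, y * a = x)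

end PartitionMonoid

namespace PartitionMonoid

variable {n : ℕ}

/-- The right action of `S^1` (identity adjoined) on `P_n`. -/
def act1 (S : Subsemigroup (PartitionMonoid n)) (u : PartitionMonoid n)
    (o : Option ↥S) : PartitionMonoid n :=
  o.elim u (fun s => u * (s : PartitionMonoid n))

/-- The stabiliser of a set `L ⊆ P_n` under the right action of `S^1` on
subsets of `P_n`. -/
def stab (S : Subsemigroup (PartitionMonoid n)) (L : Set (PartitionMonoid n)) :
    Set (Option ↥S) :=
  {o | (fun y => act1 S y o) '' L = L}

/-- A positive point `k` lies in a transverse block of the projection `x* x`. -/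
def transversePoint (x : PartitionMonoid n) (k : Fin n) : Prop :=
  ∃ j : Fin n, (star x * x).r (Sum.inl k) (Sum.inr j)

end PartitionMonoid

/-! Partitions are multiplied by stacking them as layers of a graph. Both bracketings of `x * y * z`
are read off one four-layer graph, and folding the graph of `x * (x* * x)` onto `P_n` gives back
`x`; so `P_n` is a regular ⋆-semigroup, and the kernel and homomorphism statements are algebra.
For faithfulness, every `y` in the L-class of `x` satisfies `y = y * e` with `e = x* * x`, hence
`y ⋅ o = y * (e ⋅ o)`, and `e ⋅ o` lies in the group H-class of `e`. Counting transverse blocks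
shows that an element of that H-class is determined by where it sends them. -/

open Relation

section Relations

variable {α β : Type*}

theorem Function.Injective.eqvGen_map_iff {f : α → β} (hf : f.Injective) {r : α → α → Prop}
    {r' : β → β → Prop} (hr : ∀ a b, r a b → r' (f a) (f b)) (hr' : r' ≤ Relation.Map r f f)
    (a b : α) : EqvGen r' (f a) (f b) ↔ EqvGen r a b := by
  refine ⟨fun h => ?_, fun h => ?_⟩
  · have : Nonempty α := ⟨a⟩
    have hinv := Function.leftInverse_invFun hf
    have key := Setoid.eqvGen_le (s := (EqvGen.setoid r).comap (Function.invFun f)) ?_ h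
    · rwa [Setoid.comap_rel, hinv, hinv] at key
    · intro _ _ huv
      obtain ⟨c, d, hcd, rfl, rfl⟩ := hr' _ _ huv
      rw [Setoid.comap_rel, hinv, hinv]
      exact EqvGen.rel _ _ hcd
  · exact Setoid.eqvGen_le (s := (EqvGen.setoid r').comap f)
      (fun c d hcd => EqvGen.rel _ _ (hr c d hcd)) h

theorem Relation.EqvGen.eq_of_notMem {r : α → α → Prop} {S : Set α}
    (hr : ∀ a b, r a b → a ∈ S ∧ b ∈ S) {a b : α} (h : EqvGen r a b) (ha : a ∉ S) : a = b := by
  classical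
  have key := Setoid.eqvGen_le (s := Setoid.ker fun c => if c ∈ S then none else some c)
    (fun c d hcd => by simp [Setoid.ker_def, (hr c d hcd).1, (hr c d hcd).2]) h
  simp only [Setoid.ker_def, ha, if_false] at key
  split_ifs at key with hb
  simpa using key

theorem Relation.EqvGen.of_sup_restrict {u : Setoid α} {z : α → α → Prop} {A : Set α}
    (hz : ∀ a b, z a b → a ∈ A ∧ b ∈ A) {a b : α} (ha : a ∈ A) (hb : b ∈ A)
    (h : EqvGen (fun c d => u c d ∨ z c d) a b) :
    EqvGen (fun c d => (c ∈ A ∧ d ∈ A ∧ u c d) ∨ z c d) a b := by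
  set R := EqvGen (fun c d => (c ∈ A ∧ d ∈ A ∧ u c d) ∨ z c d)
  have hR : ∀ {c d}, c ∈ A → d ∈ A → u c d → R c d := fun hc hd hcd => .rel _ _ (.inl ⟨hc, hd, hcd⟩)
  let s : Setoid α :=
    { r := fun c d => u c d ∨ ∃ c' d', c' ∈ A ∧ d' ∈ A ∧ u c c' ∧ R c' d' ∧ u d' d
      iseqv := by
        refine ⟨fun c => .inl (u.refl c), ?_, ?_⟩
        · rintro c d (h | ⟨c', d', hc', hd', h1, h2, h3⟩)
          · exact .inl (u.symm h)
          · exact .inr ⟨d', c', hd', hc', u.symm h3, .symm _ _ h2, u.symm h1⟩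
        · rintro c d e (h | ⟨c', d', hc', hd', h1, h2, h3⟩)
            (h' | ⟨c'', d'', hc'', hd'', h1', h2', h3'⟩)
          · exact .inl (u.trans h h')
          · exact .inr ⟨c'', d'', hc'', hd'', u.trans h h1', h2', h3'⟩
          · exact .inr ⟨c', d', hc', hd', h1, h2, u.trans h3 h'⟩
          · exact .inr ⟨c', d'', hc', hd'', h1,
              .trans _ _ _ (.trans _ _ _ h2 (hR hd' hc'' (u.trans h3 h1'))) h2', h3'⟩ }
  have key := Setoid.eqvGen_le (s := s) (fun c d hcd => ?_) h
  · rcases key with h | ⟨c', d', hc', hd', h1, h2, h3⟩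
    · exact hR ha hb h
    · exact .trans _ _ _ (.trans _ _ _ (hR ha hc' h1) h2) (hR hd' hb h3)
  · rcases hcd with h | h
    · exact .inl h
    · exact .inr ⟨c, d, (hz c d h).1, (hz c d h).2, u.refl c, .rel _ _ (.inr h), u.refl d⟩

theorem Relation.EqvGen.sup_map_iff {f : α → β} {c : α → α → Prop} {H Z : β → β → Prop}
    {M : Set β} (hc : ∀ a b, c a b ↔ EqvGen H (f a) (f b))
    (hH : ∀ u v, H u v → u ∈ M ∪ Set.range f ∧ v ∈ M ∪ Set.range f)
    (hZ : ∀ u v, Z u v → u ∉ M ∧ v ∉ M) {u v : β} (hu : u ∉ M) (hv : v ∉ M) :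
    EqvGen (Relation.Map c f f ⊔ Z) u v ↔ EqvGen (H ⊔ Z) u v := by
  refine ⟨fun h => Setoid.eqvGen_le (s := EqvGen.setoid (H ⊔ Z)) ?_ h, fun h => ?_⟩
  · rintro _ _ (⟨a, b, hab, rfl, rfl⟩ | h)
    · exact EqvGen.mono (fun _ _ => .inl) _ _ ((hc a b).1 hab)
    · exact .rel _ _ (.inr h)
  · have h' : EqvGen (fun c d => EqvGen.setoid H c d ∨ Z c d) u v :=
      EqvGen.mono (fun c d hcd => hcd.imp (.rel _ _) id) _ _ h
    refine Setoid.eqvGen_le (s := EqvGen.setoid (Relation.Map c f f ⊔ Z)) ?_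
      (h'.of_sup_restrict (A := Mᶜ) hZ hu hv)
    rintro u' v' (⟨hu', hv', huv⟩ | huv)
    · by_cases hfu : u' ∈ Set.range f
      · by_cases hfv : v' ∈ Set.range f
        · obtain ⟨⟨a, rfl⟩, ⟨b, rfl⟩⟩ := And.intro hfu hfv
          exact .rel _ _ (.inl ⟨a, b, (hc a b).2 huv, rfl, rfl⟩)
        · obtain rfl := (EqvGen.symm _ _ huv).eq_of_notMem hH (not_or_intro hv' hfv)
          exact .refl _
      · obtain rfl := huv.eq_of_notMem hH (not_or_intro hu' hfu)
        exact .refl _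
    · exact .rel _ _ (.inr huv)

theorem Setoid.exists_rel_apply_of_le [Finite α] {ε τ : Setoid α} (hle : ε ≤ τ)
    (Ψ : α → α) (hΨ : ∀ a b, τ (Ψ a) (Ψ b) ↔ ε a b) (m : α) : ∃ k, τ m (Ψ k) := by
  let g : Quotient ε → Quotient τ := Quotient.map' Ψ fun a b h => (hΨ a b).2 h
  have hg : g.Injective := by
    rintro ⟨a⟩ ⟨b⟩ h
    exact Quotient.sound ((hΨ a b).1 (Quotient.exact h))
  have hcard : Nat.card (Quotient τ) ≤ Nat.card (Quotient ε) :=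
    Nat.card_le_card_of_surjective (Quotient.map' id hle) (by rintro ⟨a⟩; exact ⟨⟦a⟧, rfl⟩)
  obtain ⟨c, hc⟩ := (hg.bijective_of_nat_card_le hcard).2 ⟦m⟧
  induction c using Quotient.inductionOn with
  | h k => exact ⟨k, Quotient.exact hc.symm⟩

end Relations

section StarSemigroup

variable {R : Type*} [Semigroup R] [StarMul R]

theorem star_mul_self_mul_eq (x s : R) : star (x * s) * (x * s) = star s * (star x * x) * s := by
  simp only [star_mul, mul_assoc]

theorem star_mul_self_eq_of_mul_eq {x y : R} (hxy : x * (star y * y) = x)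
    (hyx : y * (star x * x) = y) : star x * x = star y * y := by
  have hx := (IsSelfAdjoint.star_mul_self x).star_eq
  have hy := (IsSelfAdjoint.star_mul_self y).star_eq
  calc star x * x = star (star x * x * (star y * y)) := by rw [mul_assoc, hxy, hx]
    _ = star y * y * (star x * x) := by rw [star_mul, hx, hy]
    _ = star y * y := by rw [mul_assoc, hyx]

end StarSemigroup

namespace PartitionMonoid

variable {n : ℕ}

section ThreeLayers

variable (x y : PartitionMonoid n)

/-- Middle points joined by a path alternating lower blocks of `x` and upper blocks of `y`. -/
def midRel : Fin n → Fin n → Prop :=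
  EqvGen fun a b => x.r (.inr a) (.inr b) ∨ y.r (.inl a) (.inl b)

def toMid : Tri n → Fin n → Prop
  | .inl a, m => x.r (.inl a) (.inr m)
  | .inr (.inl c), m => c = m
  | .inr (.inr b), m => y.r (.inl m) (.inr b)

def outerRel : Tri n → Tri n → Prop
  | .inl a, .inl b => x.r (.inl a) (.inl b)
  | .inr (.inr a), .inr (.inr b) => y.r (.inr a) (.inr b)
  | _, _ => False

variable {x y}

theorem midRel.of_x {a b : Fin n} (h : x.r (.inr a) (.inr b)) : midRel x y a b :=
  .rel _ _ (.inl h)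

theorem midRel.of_y {a b : Fin n} (h : y.r (.inl a) (.inl b)) : midRel x y a b :=
  .rel _ _ (.inr h)

theorem midRel.trans {a b c : Fin n} (h : midRel x y a b) (h' : midRel x y b c) :
    midRel x y a c :=
  EqvGen.trans _ _ _ h h'

theorem midRel_of_toMid {t : Tri n} {m m' : Fin n} (h : toMid x y t m) (h' : toMid x y t m') :
    midRel x y m m' := by
  rcases t with a | c | b
  · exact .of_x (x.trans (x.symm h) h')
  · exact (h.symm.trans h') ▸ .refl _
  · exact .of_y (y.trans h (y.symm h'))

theorem outerRel.symm {t t' : Tri n} (h : outerRel x y t t') : outerRel x y t' t := by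
  rcases t with a | c | a <;> rcases t' with b | d | b <;> first | exact h.elim | exact x.symm h |
    exact y.symm h

theorem outerRel.trans {t t' t'' : Tri n} (h : outerRel x y t t') (h' : outerRel x y t' t'') :
    outerRel x y t t'' := by
  rcases t with a | c | a <;> rcases t' with b | d | b <;> rcases t'' with e | f | e <;>
    first | exact h.elim | exact h'.elim | exact x.trans h h' | exact y.trans h h'

theorem outerRel.toMid {t t' : Tri n} {m : Fin n} (h : outerRel x y t t') (h' : toMid x y t' m) :
    toMid x y t m := by
  rcases t with a | c | a <;> rcases t' with b | d | b <;>
    first | exact h.elim | exact x.trans h h' | exact y.trans h' (y.symm h)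

variable (x y)

/-- The components of the three-layer graph of `x * y` (`eqvGen_prodBase_iff`). -/
def prodSetoid : Setoid (Tri n) where
  r t t' := outerRel x y t t' ∨ ∃ m m', toMid x y t m ∧ midRel x y m m' ∧ toMid x y t' m'
  iseqv := by
    refine ⟨fun t => ?_, ?_, ?_⟩
    · rcases t with a | c | b
      · exact .inl (x.refl _)
      · exact .inr ⟨c, c, rfl, .refl _, rfl⟩
      · exact .inl (y.refl _)
    · rintro t t' (h | ⟨m, m', h1, h2, h3⟩)
      · exact .inl h.symm
      · exact .inr ⟨m', m, h3, .symm _ _ h2, h1⟩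
    · rintro t t' t'' (h | ⟨m, m', h1, h2, h3⟩) (h' | ⟨k, k', h1', h2', h3'⟩)
      · exact .inl (h.trans h')
      · exact .inr ⟨k, k', h.toMid h1', h2', h3'⟩
      · exact .inr ⟨m, m', h1, h2, h'.symm.toMid h3⟩
      · exact .inr ⟨m, k', h1, (h2.trans (midRel_of_toMid h3 h1')).trans h2', h3'⟩

theorem eqvGen_prodBase_iff (t t' : Tri n) :
    EqvGen (prodBase x y) t t' ↔ prodSetoid x y t t' := by
  refine ⟨fun h => Setoid.eqvGen_le ?_ h, fun h => ?_⟩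
  · rintro _ _ (⟨p, q, rfl, rfl, hpq⟩ | ⟨p, q, rfl, rfl, hpq⟩)
    · rcases p with a | c <;> rcases q with b | d
      · exact .inl hpq
      · exact .inr ⟨d, d, hpq, .refl _, rfl⟩
      · exact .inr ⟨c, c, rfl, .refl _, x.symm hpq⟩
      · exact .inr ⟨c, d, rfl, .of_x hpq, rfl⟩
    · rcases p with c | a <;> rcases q with d | b
      · exact .inr ⟨c, d, rfl, .of_y hpq, rfl⟩
      · exact .inr ⟨c, c, rfl, .refl _, hpq⟩
      · exact .inr ⟨d, d, y.symm hpq, .refl _, rfl⟩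
      · exact .inl hpq
  · have hx : ∀ {p q}, x.r p q → EqvGen (prodBase x y) (ix p) (ix q) :=
      fun h => .rel _ _ (.inl ⟨_, _, rfl, rfl, h⟩)
    have hy : ∀ {p q}, y.r p q → EqvGen (prodBase x y) (iy p) (iy q) :=
      fun h => .rel _ _ (.inr ⟨_, _, rfl, rfl, h⟩)
    have hmid : ∀ {m m'}, midRel x y m m' →
        EqvGen (prodBase x y) (.inr (.inl m)) (.inr (.inl m')) := fun h =>
      Setoid.eqvGen_le (s := (EqvGen.setoid (prodBase x y)).comap fun m => .inr (.inl m))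
        (fun a b hab => hab.elim (hx (p := .inr a) (q := .inr b)) (hy (p := .inl a) (q := .inl b)))
        h
    have htoMid : ∀ {t m}, toMid x y t m → EqvGen (prodBase x y) t (.inr (.inl m)) := by
      rintro (a | c | b) m h
      · exact hx (p := .inl a) (q := .inr m) h
      · exact h ▸ .refl _
      · exact .symm _ _ (hy (p := .inl m) (q := .inr b) h)
    rcases h with h | ⟨m, m', h1, h2, h3⟩
    · rcases t with a | c | a <;> rcases t' with b | d | b
      all_goals first | exact h.elim | exact hx (p := .inl a) (q := .inl b) h |
        exact hy (p := .inr a) (q := .inr b) h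
    · exact .trans _ _ _ (.trans _ _ _ (htoMid h1) (hmid h2)) (.symm _ _ (htoMid h3))

theorem mul_r_inl_inl (a b : Fin n) :
    (x * y).r (.inl a) (.inl b) ↔ x.r (.inl a) (.inl b) ∨
      ∃ m m', x.r (.inl a) (.inr m) ∧ midRel x y m m' ∧ x.r (.inl b) (.inr m') :=
  eqvGen_prodBase_iff x y (.inl a) (.inl b)

theorem mul_r_inl_inr (a b : Fin n) :
    (x * y).r (.inl a) (.inr b) ↔
      ∃ m m', x.r (.inl a) (.inr m) ∧ midRel x y m m' ∧ y.r (.inl m') (.inr b) :=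
  (eqvGen_prodBase_iff x y (.inl a) (.inr (.inr b))).trans (or_iff_right not_false)

theorem mul_r_inr_inr (a b : Fin n) :
    (x * y).r (.inr a) (.inr b) ↔ y.r (.inr a) (.inr b) ∨
      ∃ m m', y.r (.inl m) (.inr a) ∧ midRel x y m m' ∧ y.r (.inl m') (.inr b) :=
  eqvGen_prodBase_iff x y (.inr (.inr a)) (.inr (.inr b))

end ThreeLayers

/-- Four stacked copies of `{1,…,n}`, the first coordinate being the layer. -/
abbrev Quad (n : ℕ) := Fin 4 × Fin n

def lay (i j : Fin 4) : PBase n → Quad n := Sum.elim (Prod.mk i) (Prod.mk j)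

def tri (i j k : Fin 4) : Tri n → Quad n := Sum.elim (Prod.mk i) (Sum.elim (Prod.mk j) (Prod.mk k))

abbrev edges (i j : Fin 4) (x : PartitionMonoid n) : Quad n → Quad n → Prop :=
  Relation.Map x.r (lay i j) (lay i j)

@[simp] theorem lay_inl (i j : Fin 4) (a : Fin n) : lay i j (.inl a) = (i, a) := rfl
@[simp] theorem lay_inr (i j : Fin 4) (a : Fin n) : lay i j (.inr a) = (j, a) := rfl

theorem lay_swap (i j : Fin 4) (p : PBase n) : lay i j p.swap = lay j i p := by cases p <;> rfl

@[simp] theorem mk_mem_range_lay_left (i j : Fin 4) (a : Fin n) : (i, a) ∈ Set.range (lay i j) :=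
  ⟨.inl a, rfl⟩

@[simp] theorem mk_mem_range_lay_right (i j : Fin 4) (a : Fin n) : (j, a) ∈ Set.range (lay i j) :=
  ⟨.inr a, rfl⟩

theorem tri_ix (i j k : Fin 4) (p : PBase n) : tri i j k (ix p) = lay i j p := by cases p <;> rfl
theorem tri_iy (i j k : Fin 4) (p : PBase n) : tri i j k (iy p) = lay j k p := by cases p <;> rfl
theorem tri_iz (i j k : Fin 4) (p : PBase n) : tri i j k (iz p) = lay i k p := by cases p <;> rfl

theorem tri_injective {i j k : Fin 4} (hij : i ≠ j) (hik : i ≠ k) (hjk : j ≠ k) :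
    (tri i j k : Tri n → Quad n).Injective := by
  rintro (a | a | a) (b | b | b) h <;> simp_all [tri, eq_comm]

theorem edges_star (i j : Fin 4) (x : PartitionMonoid n) : edges j i (star x) = edges i j x := by
  ext u v
  constructor
  · rintro ⟨p, q, h, rfl, rfl⟩
    exact ⟨p.swap, q.swap, h, lay_swap .., lay_swap ..⟩
  · rintro ⟨p, q, h, rfl, rfl⟩
    refine ⟨p.swap, q.swap, ?_, lay_swap .., lay_swap ..⟩
    change x.r p.swap.swap q.swap.swap
    simpa only [Sum.swap_swap] using h

theorem mul_r_iff_eqvGen_edges {i j k : Fin 4} (hij : i ≠ j) (hik : i ≠ k) (hjk : j ≠ k)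
    (x y : PartitionMonoid n) (p q : PBase n) :
    (x * y).r p q ↔ EqvGen (edges i j x ⊔ edges j k y) (lay i k p) (lay i k q) := by
  rw [← tri_iz i j k p, ← tri_iz i j k q]
  refine ((tri_injective hij hik hjk).eqvGen_map_iff ?_ ?_ _ _).symm
  · rintro _ _ (⟨p, q, rfl, rfl, h⟩ | ⟨p, q, rfl, rfl, h⟩)
    · exact .inl ⟨p, q, h, (tri_ix ..).symm, (tri_ix ..).symm⟩
    · exact .inr ⟨p, q, h, (tri_iy ..).symm, (tri_iy ..).symm⟩
  · rintro _ _ (⟨p, q, h, rfl, rfl⟩ | ⟨p, q, h, rfl, rfl⟩)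
    · exact ⟨ix p, ix q, .inl ⟨p, q, rfl, rfl, h⟩, tri_ix .., tri_ix ..⟩
    · exact ⟨iy p, iy q, .inr ⟨p, q, rfl, rfl, h⟩, tri_iy .., tri_iy ..⟩

theorem mul_mul_r_iff (x y z : PartitionMonoid n) (p q : PBase n) :
    ((x * y) * z).r p q ↔
      EqvGen (edges 0 1 x ⊔ edges 1 2 y ⊔ edges 2 3 z) (lay 0 3 p) (lay 0 3 q) := by
  refine (mul_r_iff_eqvGen_edges (i := 0) (j := 2) (k := 3) (by decide) (by decide) (by decide)
    (x * y) z p q).trans ?_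
  refine EqvGen.sup_map_iff (M := {u | u.1 = 1})
    (fun a b => mul_r_iff_eqvGen_edges (i := 0) (j := 1) (k := 2) (by decide) (by decide)
      (by decide) x y a b)
    ?_ ?_ ?_ ?_
  · rintro _ _ (⟨p, q, -, rfl, rfl⟩ | ⟨p, q, -, rfl, rfl⟩) <;> rcases p with a | a <;>
      rcases q with b | b <;> simp
  · rintro _ _ ⟨p, q, -, rfl, rfl⟩
    rcases p with a | a <;> rcases q with b | b <;> simp
  · rcases p with a | a <;> simp
  · rcases q with a | a <;> simp

theorem mul_mul_r_iff' (x y z : PartitionMonoid n) (p q : PBase n) :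
    (x * (y * z)).r p q ↔
      EqvGen (edges 0 1 x ⊔ edges 1 2 y ⊔ edges 2 3 z) (lay 0 3 p) (lay 0 3 q) := by
  refine (mul_r_iff_eqvGen_edges (i := 0) (j := 1) (k := 3) (by decide) (by decide) (by decide)
    x (y * z) p q).trans ?_
  rw [sup_comm, sup_assoc, sup_comm (edges 0 1 x)]
  refine EqvGen.sup_map_iff (M := {u | u.1 = 2})
    (fun a b => mul_r_iff_eqvGen_edges (i := 1) (j := 2) (k := 3) (by decide) (by decide)
      (by decide) y z a b)
    ?_ ?_ ?_ ?_
  · rintro _ _ (⟨p, q, -, rfl, rfl⟩ | ⟨p, q, -, rfl, rfl⟩) <;> rcases p with a | a <;>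
      rcases q with b | b <;> simp
  · rintro _ _ ⟨p, q, -, rfl, rfl⟩
    rcases p with a | a <;> rcases q with b | b <;> simp
  · rcases p with a | a <;> simp
  · rcases q with a | a <;> simp

instance : Semigroup (PartitionMonoid n) where
  mul_assoc x y z :=
    Setoid.ext fun p q => (mul_mul_r_iff x y z p q).trans (mul_mul_r_iff' x y z p q).symm

theorem star_r (x : PartitionMonoid n) (p q : PBase n) : (star x).r p q ↔ x.r p.swap q.swap :=
  Iff.rfl

instance : StarMul (PartitionMonoid n) where
  star_involutive x := Setoid.ext fun p q => by
    change x.r p.swap.swap q.swap.swap ↔ _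
    rw [Sum.swap_swap, Sum.swap_swap]
  star_mul x y := Setoid.ext fun p q => by
    refine (mul_r_iff_eqvGen_edges (i := 0) (j := 1) (k := 2) (by decide) (by decide) (by decide)
      x y p.swap q.swap).trans (Iff.trans ?_ (mul_r_iff_eqvGen_edges (i := 2) (j := 1) (k := 0)
        (by decide) (by decide) (by decide) (star y) (star x) p q).symm)
    rw [edges_star, edges_star, sup_comm, lay_swap, lay_swap]

def fold (u : Quad n) : PBase n := if u.1 = 0 ∨ u.1 = 2 then .inl u.2 else .inr u.2

theorem mul_star_mul_self (x : PartitionMonoid n) : x * (star x * x) = x := by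
  refine Setoid.ext fun p q => (mul_mul_r_iff' x (star x) x p q).trans ⟨fun h => ?_, fun h => ?_⟩
  · have key := Setoid.eqvGen_le (s := x.comap fold) ?_ h
    · rcases p with a | a <;> rcases q with b | b <;> simpa [fold, Setoid.comap_rel] using key
    · rintro _ _ ((⟨p, q, h, rfl, rfl⟩ | ⟨p, q, h, rfl, rfl⟩) | ⟨p, q, h, rfl, rfl⟩) <;>
        rcases p with a | a <;> rcases q with b | b <;>
        simpa [fold, Setoid.comap_rel, star_r] using h
  · have top : ∀ {p q}, x.r p q → EqvGen (edges 0 1 x ⊔ edges 1 2 (star x) ⊔ edges 2 3 x)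
        (lay 0 1 p) (lay 0 1 q) := fun h => .rel _ _ (.inl (.inl ⟨_, _, h, rfl, rfl⟩))
    have mid : ∀ {p q}, (star x).r p q → EqvGen (edges 0 1 x ⊔ edges 1 2 (star x) ⊔ edges 2 3 x)
        (lay 1 2 p) (lay 1 2 q) := fun h => .rel _ _ (.inl (.inr ⟨_, _, h, rfl, rfl⟩))
    have bot : ∀ {p q}, x.r p q → EqvGen (edges 0 1 x ⊔ edges 1 2 (star x) ⊔ edges 2 3 x)
        (lay 2 3 p) (lay 2 3 q) := fun h => .rel _ _ (.inr ⟨_, _, h, rfl, rfl⟩)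
    rcases p with a | a <;> rcases q with b | b
    · exact top h
    · exact .trans _ _ _ (.trans _ _ _ (top h) (mid (p := .inl b) (q := .inr a) (x.symm h))) (bot h)
    · exact .trans _ _ _ (.trans _ _ _ (bot h) (mid (p := .inr b) (q := .inl a) (x.symm h))) (top h)
    · exact bot h

theorem isIdempotentElem_star_mul_self (x : PartitionMonoid n) :
    IsIdempotentElem (star x * x) := by
  rw [IsIdempotentElem, mul_assoc, mul_star_mul_self]

theorem star_mul_self_eq_iff_pL (x y : PartitionMonoid n) : star x * x = star y * y ↔ pL x y := by
  refine ⟨fun h => ⟨.inr ⟨y * star x, ?_⟩, .inr ⟨x * star y, ?_⟩⟩, fun ⟨hxy, hyx⟩ => ?_⟩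
  · rw [mul_assoc, h, mul_star_mul_self]
  · rw [mul_assoc, ← h, mul_star_mul_self]
  · have hmul : ∀ {x y : PartitionMonoid n}, (x = y ∨ ∃ a, a * x = y) → y * (star x * x) = y := by
      rintro x y (rfl | ⟨a, rfl⟩)
      · exact mul_star_mul_self x
      · rw [mul_assoc, mul_star_mul_self]
    exact star_mul_self_eq_of_mul_eq (hmul hyx) (hmul hxy)

section Blocks

variable {x y W W' : PartitionMonoid n} {a b k l : Fin n}

theorem exists_r_inl_inr_of_mul (h : (x * y).r (.inl a) (.inr b)) : ∃ m, x.r (.inl a) (.inr m) :=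
  have ⟨m, _, hm, _⟩ := (mul_r_inl_inr x y a b).1 h
  ⟨m, hm⟩

theorem mul_r_inl_inl_of_not_exists (h : ¬∃ m, x.r (.inl a) (.inr m)) :
    (x * y).r (.inl a) (.inl b) ↔ x.r (.inl a) (.inl b) :=
  (mul_r_inl_inl x y a b).trans (or_iff_left fun ⟨m, _, hm, _⟩ => h ⟨m, hm⟩)

theorem r_inl_inl_iff_of_isSelfAdjoint (he : IsSelfAdjoint x) :
    x.r (.inl a) (.inl b) ↔ x.r (.inr a) (.inr b) :=
  Iff.of_eq (congrArg (fun s : PartitionMonoid n => s.r (.inr a) (.inr b)) he.star_eq)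

theorem r_inl_inl_of_midRel_star (h : midRel (star W) W a b) : W.r (.inl a) (.inl b) :=
  Setoid.eqvGen_le (s := W.comap Sum.inl) (fun _ _ h => h.elim id id) h

theorem star_mul_self_r_inr_inr : (star W * W).r (.inr a) (.inr b) ↔ W.r (.inr a) (.inr b) := by
  refine (mul_r_inr_inr _ _ a b).trans ⟨?_, .inl⟩
  rintro (h | ⟨m, m', h1, hm, h2⟩)
  · exact h
  · exact W.trans (W.symm h1) (W.trans (r_inl_inl_of_midRel_star hm) h2)

theorem transversePoint_iff : transversePoint W k ↔ ∃ m, W.r (.inl m) (.inr k) := by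
  refine ⟨fun ⟨j, hj⟩ => ?_, fun ⟨m, hm⟩ =>
    ⟨k, (mul_r_inl_inr _ _ k k).2 ⟨m, m, W.symm hm, .refl _, hm⟩⟩⟩
  obtain ⟨m, _, hm, -⟩ := (mul_r_inl_inr _ _ k j).1 hj
  exact ⟨m, W.symm hm⟩

theorem transversePoint_of_r_inl_inr (hW : star W * W * W = W) (h : W.r (.inl k) (.inr l)) :
    transversePoint W k := by
  rw [← hW] at h
  exact exists_r_inl_inr_of_mul h

theorem r_inl_inl_iff_of_not_transversePoint (hW : star W * W * W = W)
    (ha : ¬transversePoint W a) : W.r (.inl a) (.inl b) ↔ (star W * W).r (.inl a) (.inl b) := by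
  have h := mul_r_inl_inl_of_not_exists (y := W) (b := b) ha
  rwa [hW] at h

theorem r_inl_inl_of_r_inr_inr (hW : star W * W * W = W) (h : W.r (.inr a) (.inr b)) :
    W.r (.inl a) (.inl b) := by
  rw [← hW]
  exact (mul_r_inl_inl _ _ _ _).2 (.inl
    ((r_inl_inl_iff_of_isSelfAdjoint (IsSelfAdjoint.star_mul_self W)).2
      (star_mul_self_r_inr_inr.2 h)))

/-- The lower parts of the transverse blocks of `W` are those of `star W * W`, while their upper
parts are unions of transverse blocks of `star W * W`; as there are equally many of both, every
transverse block of `star W * W` is the upper part of a transverse block of `W`. -/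
theorem exists_r_inl_inr_of_transversePoint (hW : star W * W * W = W) (hk : transversePoint W k) :
    ∃ j, W.r (.inl k) (.inr j) := by
  let T := {k : Fin n // ∃ m, W.r (.inl m) (.inr k)}
  let Ψ : T → T := fun k => ⟨k.2.choose, transversePoint_iff.1
    (transversePoint_of_r_inl_inr hW k.2.choose_spec)⟩
  have hΨ : ∀ k : T, W.r (.inl (Ψ k).1) (.inr k.1) := fun k => k.2.choose_spec
  have hle : W.comap (fun k : T => .inr k.1) ≤ W.comap (fun k : T => .inl k.1) :=
    fun _ _ h => r_inl_inl_of_r_inr_inr hW h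
  obtain ⟨j, hj⟩ := Setoid.exists_rel_apply_of_le hle Ψ
    (fun a b => ⟨fun h => W.trans (W.symm (hΨ a)) (W.trans h (hΨ b)),
      fun h => W.trans (hΨ a) (W.trans h (W.symm (hΨ b)))⟩)
    ⟨k, transversePoint_iff.1 hk⟩
  exact ⟨j.1, W.trans hj (hΨ j)⟩

/-- An element of the group H-class of the projection `star W * W` is determined by where it
sends the transverse blocks. -/
theorem eq_of_forall_r_inl_inr_iff (he : star W' * W' = star W * W) (hW : star W * W * W = W)
    (hW' : star W' * W' * W' = W')
    (h : ∀ k l, transversePoint W k → (W.r (.inl k) (.inr l) ↔ W'.r (.inl k) (.inr l))) :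
    W = W' := by
  have hT : ∀ k, transversePoint W' k ↔ transversePoint W k := fun k => by
    rw [transversePoint, transversePoint, he]
  have cross : ∀ k l, W.r (.inl k) (.inr l) ↔ W'.r (.inl k) (.inr l) := by
    intro k l
    by_cases hk : transversePoint W k
    · exact h k l hk
    · exact iff_of_false (mt (transversePoint_of_r_inl_inr hW) hk)
        (mt (transversePoint_of_r_inl_inr hW') (mt (hT k).1 hk))
  have top : ∀ a b, W.r (.inl a) (.inl b) ↔ W'.r (.inl a) (.inl b) := by
    intro a b
    by_cases ha : transversePoint W a
    · obtain ⟨j, hj⟩ := exists_r_inl_inr_of_transversePoint hW ha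
      have hj' := (cross a j).1 hj
      calc W.r (.inl a) (.inl b) ↔ W.r (.inl b) (.inr j) :=
            ⟨fun h => W.trans (W.symm h) hj, fun h => W.trans hj (W.symm h)⟩
        _ ↔ W'.r (.inl b) (.inr j) := cross b j
        _ ↔ W'.r (.inl a) (.inl b) :=
            ⟨fun h => W'.trans hj' (W'.symm h), fun h => W'.trans (W'.symm h) hj'⟩
    · rw [r_inl_inl_iff_of_not_transversePoint hW ha,
        r_inl_inl_iff_of_not_transversePoint hW' (mt (hT a).1 ha), he]
  refine Setoid.ext fun p q => ?_
  rcases p with a | a <;> rcases q with b | b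
  · exact top a b
  · exact cross a b
  · exact ⟨fun h => W'.symm ((cross b a).1 (W.symm h)),
      fun h => W.symm ((cross b a).2 (W'.symm h))⟩
  · rw [← star_mul_self_r_inr_inr, ← star_mul_self_r_inr_inr (W := W'), he]

end Blocks

section Action

variable (S : Subsemigroup (PartitionMonoid n))

theorem act1_mul (u v : PartitionMonoid n) (o : Option S) :
    act1 S (u * v) o = u * act1 S v o := by
  cases o
  · rfl
  · exact mul_assoc _ _ _

theorem star_act1_mul_act1_star_mul_self (x : PartitionMonoid n) (o : Option S) :
    star (act1 S (star x * x) o) * act1 S (star x * x) o = star (act1 S x o) * act1 S x o := by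
  have he : star (star x * x) * (star x * x) = star x * x := by
    rw [(IsSelfAdjoint.star_mul_self x).star_eq, (isIdempotentElem_star_mul_self x).eq]
  cases o with
  | none => exact he
  | some s =>
    show star (star x * x * s) * (star x * x * s) = star (x * s) * (x * s)
    rw [star_mul_self_mul_eq, he, star_mul_self_mul_eq]

end Action

end PartitionMonoid

open PartitionMonoid in
/-- For a subsemigroup `S` of the partition monoid `P_n`: the map
`λ : x ↦ x* x` is a homomorphism from the right-multiplication action of `S` on
`P_n` to the right action `p · s = s* p s` of `S` on projections, its kernel is
Green's L-relation on `P_n`, and, for any L-class `L` of `P_n` and any `x ∈ L`,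
the stabiliser group `S_L` (maps induced on `L` by the stabiliser of `L` in
`S^1`) acts faithfully on the set of transverse blocks of `x* x`: two
stabiliser elements inducing the same map on the transverse blocks of `x* x`
induce the same map on `L`. -/
theorem PartitionMonoid.lambda_action (n : ℕ) (S : Subsemigroup (PartitionMonoid n)) :
    -- kernel of `λ` is Green's L-relation
    (∀ x y : PartitionMonoid n, star x * x = star y * y ↔ pL x y) ∧
    -- `λ` is a homomorphism of right actions
    (∀ x : PartitionMonoid n, ∀ s ∈ S, star (x * s) * (x * s) = star s * (star x * x) * s) ∧
    -- faithfulness on transverse blocks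
    (∀ L : Set (PartitionMonoid n), (∃ x₀, L = {y | pL x₀ y}) →
      ∀ x ∈ L, ∀ o ∈ stab S L, ∀ p ∈ stab S L,
        (∀ k l : Fin n, transversePoint x k →
          ((act1 S (star x * x) o).r (Sum.inl k) (Sum.inr l) ↔
           (act1 S (star x * x) p).r (Sum.inl k) (Sum.inr l))) →
        ∀ y ∈ L, act1 S y o = act1 S y p) := by
  refine ⟨star_mul_self_eq_iff_pL, fun x s _ => star_mul_self_mul_eq x s, ?_⟩
  rintro L ⟨x₀, rfl⟩ x hx o ho p hp H y hy
  have hproj : ∀ z, pL x₀ z → star z * z = star x * x := fun z hz =>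
    ((star_mul_self_eq_iff_pL x₀ z).2 hz).symm.trans ((star_mul_self_eq_iff_pL x₀ x).2 hx)
  have hfix : ∀ q ∈ stab S {y | pL x₀ y},
      star (act1 S (star x * x) q) * act1 S (star x * x) q = star x * x := fun q hq => by
    rw [star_act1_mul_act1_star_mul_self]
    refine hproj _ (show act1 S x q ∈ {y | pL x₀ y} from ?_)
    rw [← show (fun y => act1 S y q) '' _ = _ from hq]
    exact ⟨x, hx, rfl⟩
  have hW : ∀ q ∈ stab S {y | pL x₀ y}, star (act1 S (star x * x) q) * act1 S (star x * x) q *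
      act1 S (star x * x) q = act1 S (star x * x) q := fun q hq => by
    rw [hfix q hq, ← act1_mul, (isIdempotentElem_star_mul_self x).eq]
  have key : act1 S (star x * x) o = act1 S (star x * x) p :=
    eq_of_forall_r_inl_inr_iff ((hfix p hp).trans (hfix o ho).symm) (hW o ho) (hW p hp)
      fun k l hk => H k l (by rwa [transversePoint, hfix o ho] at hk)
  have hy' : y * (star x * x) = y := by rw [← hproj y hy, mul_star_mul_self]
  rw [← hy', act1_mul S y _ o, act1_mul S y _ p, key]
end

section
/- Let G be a group, I and J finite sets, P a regular J × I matrix over G ∪ {0}, and U = M^0[G; I, J; P] the corresponding Rees 0-matrix semigroup. Let S be a subsemigroup of U and let L be the L-class of a non-zero element (i, g, j) ∈ U, i.e. L = I × G × {j}. Then every element of Stab_S(L) has the form (k, h, j) with p_{j,k} ≠ 0, and the map sending the action of (k, h, j) on L to the group element p_{j,k} h ∈ G is a well-defined injective group homomorphism from the stabiliser group S_L into G. -/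
variable {G I J : Type*}

/-- The multiplication of the Rees 0-matrix semigroup `M⁰[G; I, J; P]`:
elements are `some (i, g, j)` together with the zero `none`, and
`(i, g, j)(k, h, l) = (i, g p_{j,k} h, l)` if `p_{j,k} ≠ 0`, and `0` otherwise. -/
def rmul [Group G] (P : J → I → Option G) :
    Option (I × G × J) → Option (I × G × J) → Option (I × G × J)
  | some (i, g, j), some (k, h, l) => (P j k).map fun p => (i, g * p * h, l)
  | _, _ => none

/-- The right action of `S^1` (identity adjoined, with elements of the Rees
0-matrix semigroup as `Option (I × G × J)`) on the Rees 0-matrix semigroup. -/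
def ract1 [Group G] (P : J → I → Option G) (w : Option (I × G × J))
    (o : Option (Option (I × G × J))) : Option (I × G × J) :=
  o.elim w (rmul P w)

/-- The stabiliser of `L` in `S^1` under the right action on subsets. -/
def rstab [Group G] (P : J → I → Option G) (S : Set (Option (I × G × J)))
    (L : Set (Option (I × G × J))) : Set (Option (Option (I × G × J))) :=
  {o | (∀ s ∈ o, s ∈ S) ∧ (fun w => ract1 P w o) '' L = L}

/-!
An element of `S¹` stabilising `L = I × G × {j}` acts on `L` by right translation in the
group coordinate: `(i, g, j) ↦ (i, g p_{j,k} h, j)` for a stabiliser element `(k, h, j)`.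
The shape `(k, h, j)` with `p_{j,k} ≠ 0` is forced already by the image of a single point
`(i₀, 1, j)` staying in `L`; that image also reads off the factor `p_{j,k} h`, which thus
determines `(k, h, j)|_L`, and composing actions multiplies factors.
-/

namespace ReesZeroMatrix

def lClass (j : J) : Set (Option (I × G × J)) :=
  {w | ∃ i : I, ∃ g : G, w = some (i, g, j)}

/-- The junk value `getD 1` is only reached when `p_{j,k} = 0`, which never happens for an
element of the stabiliser of `lClass j`. -/
def lFactor [Group G] (P : J → I → Option G) (j : J) : Option (Option (I × G × J)) → G
  | some (some (k, h, _)) => (P j k).getD 1 * h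
  | _ => 1

variable [Group G] (P : J → I → Option G)

theorem lFactor_some_some {j : J} {k : I} {pk : G} (hP : P j k = some pk) (h : G) (l : J) :
    lFactor P j (some (some (k, h, l))) = pk * h := by
  simp [lFactor, hP]

theorem exists_eq_of_rmul_mem_lClass {i : I} {g : G} {j l : J} {s : Option (I × G × J)}
    (hs : rmul P (some (i, g, j)) s ∈ lClass l) :
    ∃ k : I, ∃ h : G, s = some (k, h, l) ∧ P j k ≠ none := by
  obtain ⟨i', g', hw⟩ := hs
  match s with
  | none => simp [rmul] at hw
  | some (k, h, l') =>
    obtain ⟨pk, hP, -, -, rfl⟩ : ∃ pk, P j k = some pk ∧ i = i' ∧ g * pk * h = g' ∧ l' = l := by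
      simpa [rmul] using hw
    exact ⟨k, h, rfl, by simp [hP]⟩

theorem ract1_eq_of_mem_lClass {i : I} {g : G} {j : J} {o : Option (Option (I × G × J))}
    (ho : ract1 P (some (i, g, j)) o ∈ lClass j) :
    ract1 P (some (i, g, j)) o = some (i, g * lFactor P j o, j) := by
  match o with
  | none => simp [ract1, lFactor]
  | some s =>
    obtain ⟨k, h, rfl, hne⟩ := exists_eq_of_rmul_mem_lClass P ho
    obtain ⟨pk, hP⟩ := Option.ne_none_iff_exists'.mp hne
    simp [ract1, rmul, hP, lFactor_some_some P hP, mul_assoc]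

variable {P}

theorem ract1_mem_of_mem_rstab {S L : Set (Option (I × G × J))} {o : Option (Option (I × G × J))}
    (ho : o ∈ rstab P S L) {w : Option (I × G × J)} (hw : w ∈ L) : ract1 P w o ∈ L :=
  ho.2 ▸ Set.mem_image_of_mem _ hw

theorem exists_eq_of_mem_rstab {S : Set (Option (I × G × J))} {j : J} (i₀ : I)
    {s : Option (I × G × J)} (hs : some s ∈ rstab P S (lClass j)) :
    ∃ k : I, ∃ h : G, s = some (k, h, j) ∧ P j k ≠ none :=
  exists_eq_of_rmul_mem_lClass (g := 1) P (ract1_mem_of_mem_rstab hs ⟨i₀, 1, rfl⟩)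

theorem ract1_of_mem_rstab {S : Set (Option (I × G × J))} {j : J}
    {o : Option (Option (I × G × J))} (ho : o ∈ rstab P S (lClass j)) (i : I) (g : G) :
    ract1 P (some (i, g, j)) o = some (i, g * lFactor P j o, j) :=
  ract1_eq_of_mem_lClass P (ract1_mem_of_mem_rstab ho ⟨i, g, rfl⟩)

end ReesZeroMatrix

open ReesZeroMatrix

theorem reesZeroMatrix_stab_embeds_general [Group G]
    (P : J → I → Option G)
    (S : Set (Option (I × G × J)))
    (i₀ : I) (j : J)
    (L : Set (Option (I × G × J)))
    (hL : L = {w | ∃ i' : I, ∃ g' : G, w = some (i', g', j)}) :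
    -- every non-identity element of the stabiliser has the form `(k, h, j)`
    -- with `p_{j,k} ≠ 0`
    (∀ o ∈ rstab P S L, ∀ s : Option (I × G × J), o = some s →
      ∃ k : I, ∃ h : G, s = some (k, h, j) ∧ P j k ≠ none) ∧
    -- the map `ζ : S_L → G`, `(k, h, j)|_L ↦ p_{j,k} h`, is a well-defined
    -- injective group homomorphism
    ∃ ζ : {o // o ∈ rstab P S L} → G,
      (∀ o : {o // o ∈ rstab P S L},
        (o.1 = none → ζ o = 1) ∧
        (∀ k : I, ∀ h : G, o.1 = some (some (k, h, j)) →
          ∃ pk : G, P j k = some pk ∧ ζ o = pk * h)) ∧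
      (∀ o p : {o // o ∈ rstab P S L},
        ((∀ w ∈ L, ract1 P w o.1 = ract1 P w p.1) ↔ ζ o = ζ p)) ∧
      (∀ o p q : {o // o ∈ rstab P S L},
        (∀ w ∈ L, ract1 P (ract1 P w o.1) p.1 = ract1 P w q.1) → ζ q = ζ o * ζ p) := by
  obtain rfl : L = lClass j := hL
  have hact := fun (o : {o // o ∈ rstab P S (lClass j)}) => ract1_of_mem_rstab o.2
  refine ⟨fun o ho s hs => exists_eq_of_mem_rstab i₀ (hs ▸ ho), fun o => lFactor P j o.1,
    fun o => ⟨fun h => by simp [h, lFactor], ?_⟩, ?_, ?_⟩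
  · intro k h ho
    obtain ⟨_, _, hs, hne⟩ := exists_eq_of_mem_rstab i₀ (ho ▸ o.2)
    obtain ⟨rfl, rfl⟩ := by simpa using hs
    obtain ⟨pk, hP⟩ := Option.ne_none_iff_exists'.mp hne
    exact ⟨pk, hP, by simp only [ho, lFactor_some_some P hP]⟩
  · intro o p
    refine ⟨fun hall => ?_, ?_⟩
    · simpa [hact] using hall _ ⟨i₀, 1, rfl⟩
    · rintro (heq : lFactor P j o.1 = lFactor P j p.1) w ⟨i', g', rfl⟩
      rw [hact o, hact p, heq]
  · intro o p q hall
    simpa [hact, mul_assoc, eq_comm] using hall _ ⟨i₀, 1, rfl⟩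

/-- For a subsemigroup `S` of a finite regular Rees 0-matrix semigroup
`M⁰[G; I, J; P]` over a group `G`, and `L = I × G × {j}` the L-class of a
non-zero element `(i₀, g₀, j)`: every element of `Stab_S(L)` lying in `S` has
the form `(k, h, j)` with `p_{j,k} ≠ 0`, and the assignment
`(k, h, j)|_L ↦ p_{j,k} h` is a well-defined injective group homomorphism from
the stabiliser group `S_L` into `G`. -/
theorem reesZeroMatrix_stab_embeds [Group G] [Finite I] [Finite J]
    (P : J → I → Option G)
    (hreg : (∀ j : J, ∃ i : I, P j i ≠ none) ∧ (∀ i : I, ∃ j : J, P j i ≠ none))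
    (S : Set (Option (I × G × J))) (hS : ∀ a ∈ S, ∀ b ∈ S, rmul P a b ∈ S)
    (i₀ : I) (g₀ : G) (j : J)
    (L : Set (Option (I × G × J)))
    (hL : L = {w | ∃ i' : I, ∃ g' : G, w = some (i', g', j)}) :
    -- every non-identity element of the stabiliser has the form `(k, h, j)`
    -- with `p_{j,k} ≠ 0`
    (∀ o ∈ rstab P S L, ∀ s : Option (I × G × J), o = some s →
      ∃ k : I, ∃ h : G, s = some (k, h, j) ∧ P j k ≠ none) ∧
    -- the map `ζ : S_L → G`, `(k, h, j)|_L ↦ p_{j,k} h`, is a well-defined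
    -- injective group homomorphism
    ∃ ζ : {o // o ∈ rstab P S L} → G,
      (∀ o : {o // o ∈ rstab P S L},
        (o.1 = none → ζ o = 1) ∧
        (∀ k : I, ∀ h : G, o.1 = some (some (k, h, j)) →
          ∃ pk : G, P j k = some pk ∧ ζ o = pk * h)) ∧
      (∀ o p : {o // o ∈ rstab P S L},
        ((∀ w ∈ L, ract1 P w o.1 = ract1 P w p.1) ↔ ζ o = ζ p)) ∧
      (∀ o p q : {o // o ∈ rstab P S L},
        (∀ w ∈ L, ract1 P (ract1 P w o.1) p.1 = ract1 P w q.1) → ζ q = ζ o * ζ p) :=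
  reesZeroMatrix_stab_embeds_general P S i₀ j L hL
end
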